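/- Let r1, r2 ∈ R^3 be nonzero and not collinear, and γ1, γ2 > 0. Then the matrix W = −γ1 S(r1)² − γ2 S(r2)² is symmetric positive definite. -/

import Mathlib

/-!
Since `S(r)ᵀ = -S(r)`, we have `-S(r)² = S(r)ᵀ S(r)`, so the quadratic form of `W` is
`xᵀ W x = γ₁ ‖r₁ × x‖² + γ₂ ‖r₂ × x‖²`. It vanishes only when `x` is parallel to both `r₁` and
`r₂`, which for `x ≠ 0` would force `r₁ × r₂ = 0`.
-/

open Matrix

noncomputable section

/-- The skew-symmetric (cross-product) matrix `S(x)`, satisfying `S(x) y = x × y`. -/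
def sk (x : Fin 3 → ℝ) : Matrix (Fin 3) (Fin 3) ℝ :=
  !![0, -x 2, x 1; x 2, 0, -x 0; -x 1, x 0, 0]

section CrossProduct

variable {F : Type*} [Field F] {x u v : Fin 3 → F}

theorem exists_smul_eq_of_cross_eq_zero (hx : x ≠ 0) (h : x ⨯₃ u = 0) : ∃ a : F, a • x = u := by
  have hdep : ¬LinearIndependent F ![x, u] := fun hli ↦
    crossProduct_ne_zero_iff_linearIndependent.mpr hli h
  simpa [LinearIndependent.pair_iff' hx] using hdep

theorem cross_eq_zero_of_cross_eq_zero (hx : x ≠ 0) (hu : x ⨯₃ u = 0) (hv : x ⨯₃ v = 0) :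
    u ⨯₃ v = 0 := by
  obtain ⟨a, rfl⟩ := exists_smul_eq_of_cross_eq_zero hx hu
  obtain ⟨b, rfl⟩ := exists_smul_eq_of_cross_eq_zero hx hv
  simp [cross_self]

end CrossProduct

theorem sk_mulVec (x y : Fin 3 → ℝ) : sk x *ᵥ y = x ⨯₃ y := by
  ext i
  fin_cases i <;> simp [sk, cross_apply, mulVec, vecHead, vecTail] <;> ring

theorem sk_transpose (x : Fin 3 → ℝ) : (sk x)ᵀ = -sk x := by
  ext i j
  fin_cases i <;> fin_cases j <;> simp [sk]

theorem neg_sk_sq (x : Fin 3 → ℝ) : -(sk x ^ 2) = (sk x)ᵀ * sk x := by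
  rw [sk_transpose, sq, neg_mul]

theorem isHermitian_neg_sk_sq (x : Fin 3 → ℝ) : (-(sk x ^ 2)).IsHermitian := by
  rw [neg_sk_sq]
  exact (posSemidef_conjTranspose_mul_self (sk x)).isHermitian

theorem dotProduct_neg_sk_sq_mulVec (x y : Fin 3 → ℝ) :
    y ⬝ᵥ (-(sk x ^ 2) *ᵥ y) = (x ⨯₃ y) ⬝ᵥ (x ⨯₃ y) := by
  rw [neg_sk_sq, ← mulVec_mulVec, dotProduct_mulVec, vecMul_transpose, sk_mulVec]

theorem W_posDef_general (r₁ r₂ : Fin 3 → ℝ) (γ₁ γ₂ : ℝ) (hγ₁ : 0 < γ₁) (hγ₂ : 0 < γ₂)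
    (hcol : crossProduct r₁ r₂ ≠ 0) :
    (-(γ₁ • sk r₁ ^ 2) - γ₂ • sk r₂ ^ 2).PosDef := by
  have hW : -(γ₁ • sk r₁ ^ 2) - γ₂ • sk r₂ ^ 2 = γ₁ • -(sk r₁ ^ 2) + γ₂ • -(sk r₂ ^ 2) := by
    simp only [smul_neg, sub_eq_add_neg]
  rw [hW, posDef_iff_dotProduct_mulVec]
  refine ⟨((isHermitian_neg_sk_sq r₁).smul (.all γ₁)).add
    ((isHermitian_neg_sk_sq r₂).smul (.all γ₂)), fun y hy ↦ ?_⟩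
  simp only [star_trivial, add_mulVec, smul_mulVec, dotProduct_add, dotProduct_smul,
    dotProduct_neg_sk_sq_mulVec, smul_eq_mul]
  have hq₁ : 0 ≤ (r₁ ⨯₃ y) ⬝ᵥ (r₁ ⨯₃ y) := by simpa using dotProduct_self_star_nonneg (r₁ ⨯₃ y)
  have hq₂ : 0 ≤ (r₂ ⨯₃ y) ⬝ᵥ (r₂ ⨯₃ y) := by simpa using dotProduct_self_star_nonneg (r₂ ⨯₃ y)
  have hparallel : r₁ ⨯₃ y ≠ 0 ∨ r₂ ⨯₃ y ≠ 0 := by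
    by_contra! h
    refine hcol (cross_eq_zero_of_cross_eq_zero hy ?_ ?_) <;> simp [← cross_anticomm, h.1, h.2]
  rcases hparallel with h | h
  · have hpos : 0 < (r₁ ⨯₃ y) ⬝ᵥ (r₁ ⨯₃ y) := by simpa using dotProduct_self_star_pos_iff.mpr h
    exact add_pos_of_pos_of_nonneg (mul_pos hγ₁ hpos) (mul_nonneg hγ₂.le hq₂)
  · have hpos : 0 < (r₂ ⨯₃ y) ⬝ᵥ (r₂ ⨯₃ y) := by simpa using dotProduct_self_star_pos_iff.mpr h
    exact add_pos_of_nonneg_of_pos (mul_nonneg hγ₁.le hq₁) (mul_pos hγ₂ hpos)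

theorem W_posDef (r₁ r₂ : Fin 3 → ℝ) (γ₁ γ₂ : ℝ) (hγ₁ : 0 < γ₁) (hγ₂ : 0 < γ₂)
    (hr₁ : r₁ ≠ 0) (hr₂ : r₂ ≠ 0) (hcol : crossProduct r₁ r₂ ≠ 0) :
    (-(γ₁ • sk r₁ ^ 2) - γ₂ • sk r₂ ^ 2).PosDef :=
  W_posDef_general r₁ r₂ γ₁ γ₂ hγ₁ hγ₂ hcol

end
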